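/- Reduction of singularities via maximal contact: let D be a special polyhedra system and T ∉ Sing(D) a stratum having maximal contact with D. If Hironaka's projection D^T of D from T admits a reduction of singularities, then D admits a reduction of singularities. -/

import Mathlib

open scoped Pointwise

namespace RedSing

/-! ### Vectors and polyhedra.
A vector "in `ℝ^J`" is a function `ℕ → ℝ` supported on the finite set `J`. -/

abbrev Vec : Type := ℕ → ℝ

/-- The cone `ℝ_{≥0}^J` of nonnegative vectors supported on `J`. -/
def suppCone (J : Finset ℕ) : Set Vec :=
  {σ | (∀ j, 0 ≤ σ j) ∧ ∀ j, j ∉ J → σ j = 0}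

/-- Positive convex hull `[[A]] = convexHull (A + ℝ_{≥0}^J)`. -/
noncomputable def posHull (J : Finset ℕ) (A : Set Vec) : Set Vec :=
  convexHull ℝ (A + suppCone J)

/-- The lattice points `(1/d)·ℤ_{≥0}^J`. -/
def latticePts (J : Finset ℕ) (d : ℕ) : Set Vec :=
  {σ | σ ∈ suppCone J ∧ ∀ j, ∃ m : ℕ, σ j = (m : ℝ) / (d : ℝ)}

/-- `Δ ⊆ ℝ_{≥0}^J` is a characteristic polyhedron with denominator `d`. -/
def IsCharPoly (J : Finset ℕ) (d : ℕ) (Δ : Set Vec) : Prop :=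
  ∃ A, A ⊆ latticePts J d ∧ Δ = posHull J A

/-! ### Support fabrics -/

/-- A support fabric: a nonempty finite index set `I` together with a
downward-closed family `H` of subsets of `I` (the strata). -/
structure Fabric where
  I : Finset ℕ
  I_nonempty : I.Nonempty
  H : Set (Finset ℕ)
  mem_sub : ∀ J ∈ H, J ⊆ I
  downward : ∀ J ∈ H, ∀ J' ⊆ J, J' ∈ H

/-- Dimension of a support fabric: the maximal cardinality of a stratum. -/
noncomputable def Fabric.dim (F : Fabric) : ℕ :=
  sSup {n | ∃ J ∈ F.H, J.card = n}

/-- The Zariski topology on finsets: the open sets are the downward-closed families;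
subsets such as the strata set `H` carry the subspace topology. -/
instance zariskiTopology : TopologicalSpace (Finset ℕ) where
  IsOpen U := ∀ J ∈ U, ∀ J' ⊆ J, J' ∈ U
  isOpen_univ := fun J _ J' _ => Set.mem_univ J'
  isOpen_inter := fun s t hs ht J hJ J' hJ' => ⟨hs J hJ.1 J' hJ', ht J hJ.2 J' hJ'⟩
  isOpen_sUnion := fun S hS J hJ J' hJ' => by
    obtain ⟨t, htS, hJt⟩ := hJ
    exact ⟨t, htS, hS t htS J hJt J' hJ'⟩

/-! ### Polyhedra systems -/

/-- A polyhedra system over a support fabric: a nonempty characteristic polyhedron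
with denominator `d` for each stratum, compatible with the projections
(restriction of functions). -/
structure PolySys where
  F : Fabric
  d : ℕ
  d_pos : 0 < d
  Δ : Finset ℕ → Set Vec
  char : ∀ J ∈ F.H, IsCharPoly J d (Δ J)
  nonempty : ∀ J ∈ F.H, (Δ J).Nonempty
  compat : ∀ J₁ ∈ F.H, ∀ J₂ ∈ F.H, J₁ ⊆ J₂ →
    Δ J₁ = (fun σ => fun j => if j ∈ J₁ then σ j else 0) '' Δ J₂

/-- Contact exponent `δ(Δ) = min {|σ| : σ ∈ Δ}` (with the convention `δ = -1`
for the empty index set). -/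
noncomputable def contactExp (J : Finset ℕ) (Δ : Set Vec) : ℝ :=
  if J = (∅ : Finset ℕ) then -1 else sInf ((fun σ => ∑ j ∈ J, σ j) '' Δ)

/-- Singular locus: strata with contact exponent at least 1. -/
def Sing (D : PolySys) : Set (Finset ℕ) :=
  {J | J ∈ D.F.H ∧ 1 ≤ contactExp J (D.Δ J)}

/-- `D` is special: `δ(D) = max {δ(Δ_J)} = 1`. -/
def IsSpecial (D : PolySys) : Prop :=
  (∀ J ∈ D.F.H, contactExp J (D.Δ J) ≤ 1) ∧ ∃ J ∈ D.F.H, contactExp J (D.Δ J) = 1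

/-! ### Blow-ups and transforms -/

/-- The strata of the blow-up centered in `J`, with new index `inf` (playing `∞`). -/
def blowupH (H : Set (Finset ℕ)) (J : Finset ℕ) (inf : ℕ) : Set (Finset ℕ) :=
  {K | K ∈ H ∧ ¬ J ⊆ K} ∪
    {J' | ∃ K, (K ∈ H ∧ J ⊆ K) ∧ ∃ A, A ⊂ J ∧ J' = (K \ J) ∪ A ∪ {inf}}

/-- The map `π_J^#` from the strata of the blow-up to the strata of `F`. -/
def blowdown (J : Finset ℕ) (inf : ℕ) (J' : Finset ℕ) : Finset ℕ :=
  if inf ∈ J' then (J'.erase inf) ∪ J else J'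

/-- The map `λ_{J'} : ℝ^K → ℝ^{J'}`. -/
noncomputable def lamMap (J J' : Finset ℕ) (inf : ℕ) (σ : Vec) : Vec :=
  fun j => if j = inf then ∑ i ∈ J, σ i else if j ∈ J' then σ j else 0

/-- The indicator vector `e_{J',∞}` of the new index. -/
def eVec (inf : ℕ) : Vec := fun j => if j = inf then 1 else 0

/-- The polyhedron `Δ⁰_{J'}` of the total transform at a stratum `J'` of the blow-up. -/
noncomputable def totalΔ (D : PolySys) (J : Finset ℕ) (inf : ℕ) (J' : Finset ℕ) : Set Vec :=
  if inf ∈ J' then posHull J' (lamMap J J' inf '' D.Δ (blowdown J inf J'))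
  else D.Δ J'

/-- The polyhedron `Δ'_{J'} = Δ⁰_{J'} - e_{J',∞}` of the characteristic transform
(`e_{J',∞} = 0` when `∞ ∉ J'`). -/
noncomputable def charΔ (D : PolySys) (J : Finset ℕ) (inf : ℕ) (J' : Finset ℕ) : Set Vec :=
  if inf ∈ J' then
    (fun σ => σ - eVec inf) '' posHull J' (lamMap J J' inf '' D.Δ (blowdown J inf J'))
  else D.Δ J'

/-- `D'` is the total transform `Λ⁰_J(D)` of `D` centered in the nonempty stratum `J`,
with new index `inf`. -/
def IsTotalTransformAt (D D' : PolySys) (J : Finset ℕ) (inf : ℕ) : Prop :=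
  J ∈ D.F.H ∧ J ≠ ∅ ∧ D'.d = D.d ∧ inf ∉ D.F.I ∧
  D'.F.I = insert inf D.F.I ∧ D'.F.H = blowupH D.F.H J inf ∧
  ∀ J' ∈ D'.F.H, D'.Δ J' = totalΔ D J inf J'

/-- `D'` is a total transform of `D` centered in `J`. -/
def IsTotalTransform (D D' : PolySys) (J : Finset ℕ) : Prop :=
  ∃ inf, IsTotalTransformAt D D' J inf

/-- `D'` is the characteristic transform `Λ_J(D)` of `D` centered in the singular
stratum `J`, with new index `inf`. -/
def IsCharTransformAt (D D' : PolySys) (J : Finset ℕ) (inf : ℕ) : Prop :=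
  J ∈ Sing D ∧ D'.d = D.d ∧ inf ∉ D.F.I ∧
  D'.F.I = insert inf D.F.I ∧ D'.F.H = blowupH D.F.H J inf ∧
  ∀ J' ∈ D'.F.H, D'.Δ J' = charΔ D J inf J'

/-- `D'` is a characteristic transform of `D` centered in `J`. -/
def IsCharTransform (D D' : PolySys) (J : Finset ℕ) : Prop :=
  ∃ inf, IsCharTransformAt D D' J inf

/-- A reduction of singularities of `D`: a finite sequence of characteristic
transforms, each centered in a singular stratum of the previous system, ending
in a system with empty singular locus. -/
def HasReduction (D : PolySys) : Prop :=
  ∃ (k : ℕ) (seq : ℕ → PolySys), seq 0 = D ∧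
    (∀ i, i < k → ∃ J, IsCharTransform (seq i) (seq (i + 1)) J) ∧
    Sing (seq k) = ∅

/-! ### Strict tangent space and maximal contact -/

/-- Hironaka's strict tangent space `T(Δ)` of a polyhedron `Δ ⊆ ℝ_{≥0}^J`. -/
def strictTangent (J : Finset ℕ) (Δ : Set Vec) : Set ℕ :=
  {j | ∃ σ ∈ Δ, (∑ i ∈ J, σ i) = 1 ∧ σ j ≠ 0}

/-- The stratum `T` has maximal contact with the (special) system `D`. -/
def HasMaximalContact (D : PolySys) (T : Finset ℕ) : Prop :=
  T ∈ D.F.H ∧ ∀ J ∈ Sing D, (↑T : Set ℕ) ⊆ strictTangent J (D.Δ J)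

/-! ### Hironaka's projection from a stratum `T` -/

/-- Hironaka's projection `∇_J^T(σ) = σ|_{J∖T} / (1 - Σ_{j∈T} σ(j))`. -/
noncomputable def hironakaProj (T J : Finset ℕ) (σ : Vec) : Vec :=
  fun j => if j ∈ J \ T then σ j / (1 - ∑ i ∈ T, σ i) else 0

/-- The polyhedron `Δ^T_{J*} = ∇_J^T(Δ_J ∩ M_J^T)` of Hironaka's projection,
where `J = J* ∪ T`. -/
noncomputable def projΔ (D : PolySys) (T J' : Finset ℕ) : Set Vec :=
  hironakaProj T (J' ∪ T) '' {σ | σ ∈ D.Δ (J' ∪ T) ∧ (∑ i ∈ T, σ i) < 1}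

/-- The strata `H^T = {J ∖ T : T ⊆ J ∈ H}` of the projected fabric `F^T`. -/
def projH (F : Fabric) (T : Finset ℕ) : Set (Finset ℕ) :=
  {J' | ∃ J, (J ∈ F.H ∧ T ⊆ J) ∧ J' = J \ T}

/-- The singular locus of Hironaka's projection `D^T`. -/
def projSing (D : PolySys) (T : Finset ℕ) : Set (Finset ℕ) :=
  {J' | J' ∈ projH D.F T ∧ (projΔ D T J').Nonempty ∧ 1 ≤ contactExp J' (projΔ D T J')}

/-- `E` is Hironaka's projection `D^T` of `D` from the stratum `T`
(a polyhedra system over `F^T` with denominator `d!·d`). -/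
def IsHironakaProjection (D E : PolySys) (T : Finset ℕ) : Prop :=
  E.F.I = D.F.I \ T ∧ E.F.H = projH D.F T ∧ E.d = Nat.factorial D.d * D.d ∧
  ∀ J' ∈ E.F.H, E.Δ J' = projΔ D T J'

/-! ### Reduction `Red_C` of a system to a closed set `C` of strata -/

/-- The fabric `Red_C(F)`, with strata `H_C = ⋃_{J ∈ C} P(J)`. -/
def Fabric.red (F : Fabric) (C : Set (Finset ℕ)) : Fabric where
  I := F.I
  I_nonempty := F.I_nonempty
  H := {J' | ∃ J, (J ∈ C ∧ J ∈ F.H) ∧ J' ⊆ J}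
  mem_sub := by
    rintro J' ⟨J, ⟨_, hJH⟩, hsub⟩
    exact hsub.trans (F.mem_sub J hJH)
  downward := by
    rintro J' ⟨J, hJ, hsub⟩ J'' hsub'
    exact ⟨J, hJ, hsub'.trans hsub⟩

/-- The reduction `Red_C(D)` of a polyhedra system to a closed set `C ⊆ H`. -/
noncomputable def PolySys.red (D : PolySys) (C : Set (Finset ℕ)) : PolySys where
  F := D.F.red C
  d := D.d
  d_pos := D.d_pos
  Δ := D.Δ
  char := by
    rintro J ⟨K, ⟨_, hK⟩, hsub⟩
    exact D.char J (D.F.downward K hK J hsub)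
  nonempty := by
    rintro J ⟨K, ⟨_, hK⟩, hsub⟩
    exact D.nonempty J (D.F.downward K hK J hsub)
  compat := by
    rintro J₁ ⟨K₁, ⟨_, hK₁⟩, h₁⟩ J₂ ⟨K₂, ⟨_, hK₂⟩, h₂⟩ h12
    exact D.compat J₁ (D.F.downward K₁ hK₁ J₁ h₁) J₂ (D.F.downward K₂ hK₂ J₂ h₂) h12

/-- A special polyhedra system is consistent if for each connected component `C`
of its singular locus there is a stratum having maximal contact with `Red_C(D)`
(non-singular systems are consistent by convention). -/
def IsConsistent (D : PolySys) : Prop :=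
  ∀ x ∈ Sing D, ∃ T, HasMaximalContact (D.red (connectedComponentIn (Sing D) x)) T

/-! ### Fitting and Spivakovsky's invariant -/

/-- The fitting vector `w_Δ(j) = min {σ(j) : σ ∈ Δ}`. -/
noncomputable def fitVec (Δ : Set Vec) : Vec := fun j => sInf ((fun σ => σ j) '' Δ)

/-- The fitting `Δ̃ = Δ - w_Δ`. -/
noncomputable def fitting (Δ : Set Vec) : Set Vec := (fun σ => σ - fitVec Δ) '' Δ

/-- Spivakovsky's invariant `Spi_D = max {δ(Δ̃_J) : J ∈ Sing(D)}`. -/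
noncomputable def spi (D : PolySys) : ℝ :=
  sSup {x | ∃ J ∈ Sing D, contactExp J (fitting (D.Δ J)) = x}

/-- `S(D) = {J ∈ Sing(D) : δ(Δ̃_J) = Spi_D}`. -/
def SSet (D : PolySys) : Set (Finset ℕ) :=
  {J | J ∈ Sing D ∧ contactExp J (fitting (D.Δ J)) = spi D}

/-! ### Moderated transforms, normal crossings, quasi-ordinary systems -/

/-- The polyhedron of the `d`-moderated transform `Θ^d_J(N) = N(Λ_J(N/d))`
at a stratum `J'` of the blow-up. -/
noncomputable def modΔ (N : PolySys) (d : ℕ) (J : Finset ℕ) (inf : ℕ) (J' : Finset ℕ) :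
    Set Vec :=
  if inf ∈ J' then
    (fun σ => σ - (d : ℝ) • eVec inf) ''
      posHull J' (lamMap J J' inf '' N.Δ (blowdown J inf J'))
  else N.Δ J'

/-- `N'` is the `d`-moderated transform `Θ^d_J(N)` of the Newton polyhedra system `N`
centered in a stratum `J` with `δ(N_J) ≥ d`, with new index `inf`. -/
def IsModTransformAt (N N' : PolySys) (d : ℕ) (J : Finset ℕ) (inf : ℕ) : Prop :=
  N.d = 1 ∧ N'.d = 1 ∧ J ∈ N.F.H ∧ (d : ℝ) ≤ contactExp J (N.Δ J) ∧ inf ∉ N.F.I ∧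
  N'.F.I = insert inf N.F.I ∧ N'.F.H = blowupH N.F.H J inf ∧
  ∀ J' ∈ N'.F.H, N'.Δ J' = modΔ N d J inf J'

/-- `N'` is a `d`-moderated transform of `N` centered in `J`. -/
def IsModTransform (N N' : PolySys) (d : ℕ) (J : Finset ℕ) : Prop :=
  ∃ inf, IsModTransformAt N N' d J inf

/-- A Newton polyhedra system has normal crossings if each polyhedron has a
single vertex. -/
def HasNormalCrossings (D : PolySys) : Prop :=
  ∀ J ∈ D.F.H, ∃ σ, D.Δ J = posHull J {σ}

/-- `D` is Hironaka quasi-ordinary: each polyhedron over a singular stratum has a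
single vertex. -/
def IsQuasiOrdinary (D : PolySys) : Prop :=
  ∀ J ∈ Sing D, ∃ σ, D.Δ J = posHull J {σ}

/-! ### Lexicographic order on sequences of naturals -/

/-- Strict lexicographic order on sequences `ℕ → ℕ`. -/
def LexLt (φ ψ : ℕ → ℕ) : Prop := ∃ n, φ n < ψ n ∧ ∀ m < n, φ m = ψ m

/-- A weakly decreasing sequence of naturals. -/
def WeaklyDecr (φ : ℕ → ℕ) : Prop := ∀ n, φ (n + 1) ≤ φ n

/-!
Induction on the length of a reduction of `D^T`. If `E = D^T` and `E → E'` is the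
characteristic transform centred in `J* ∈ Sing(E)`, then `J* ∪ T ∈ Sing(D)`, and the transform
`D'` of `D` centred in `J* ∪ T` with the same exceptional index satisfies `E' = D'^T`, while
`T ∉ Sing(D')` and `T` keeps maximal contact with `D'`. The heart of this is that `∇` commutes
with the transform, `∇(λσ - e_∞) = λ(∇σ) - e_∞`, and that `∇` is monotone, so that the
positive cones match. At the end, `Sing(D^T) = ∅` forces `Sing(D) = ∅`: maximal contact makes
every singular stratum contain `T`, and for such strata `|∇σ| ≥ 1 ↔ |σ| ≥ 1`.
-/

lemma zero_mem_suppCone (J : Finset ℕ) : (0 : Vec) ∈ suppCone J :=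
  ⟨fun _ => le_rfl, fun _ _ => rfl⟩

lemma add_mem_suppCone {J : Finset ℕ} {x y : Vec} (hx : x ∈ suppCone J)
    (hy : y ∈ suppCone J) : x + y ∈ suppCone J :=
  ⟨fun j => add_nonneg (hx.1 j) (hy.1 j), fun j hj => by simp [hx.2 j hj, hy.2 j hj]⟩

lemma smul_mem_suppCone {J : Finset ℕ} {c : ℝ} (hc : 0 ≤ c) {x : Vec}
    (hx : x ∈ suppCone J) : c • x ∈ suppCone J :=
  ⟨fun j => mul_nonneg hc (hx.1 j), fun j hj => by simp [hx.2 j hj]⟩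

lemma suppCone_mono {J J' : Finset ℕ} (h : J ⊆ J') : suppCone J ⊆ suppCone J' :=
  fun _ hx => ⟨hx.1, fun j hj => hx.2 j (fun hjJ => hj (h hjJ))⟩

lemma convex_suppCone (J : Finset ℕ) : Convex ℝ (suppCone J) :=
  fun _ hx _ hy _ _ ha hb _ => add_mem_suppCone (smul_mem_suppCone ha hx) (smul_mem_suppCone hb hy)

lemma add_suppCone_eq_suppCone {J : Finset ℕ} {X : Set Vec} (hX : X ⊆ suppCone J)
    (h0 : (0 : Vec) ∈ X) : X + suppCone J = suppCone J := by
  refine Set.Subset.antisymm ?_ fun c hc => ⟨0, h0, c, hc, zero_add c⟩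
  rintro _ ⟨x, hx, y, hy, rfl⟩
  exact add_mem_suppCone (hX hx) hy

lemma posHull_eq_add (J : Finset ℕ) (A : Set Vec) :
    posHull J A = convexHull ℝ A + suppCone J := by
  rw [posHull, convexHull_add, (convex_suppCone J).convexHull_eq]

lemma image_sub_const_eq_add {G : Type*} [AddGroup G] (e : G) (X : Set G) :
    (fun σ => σ - e) '' X = X + {-e} := by
  simp_rw [Set.add_singleton, sub_eq_add_neg]

lemma _root_.IsLinearMap.image_add {R M N : Type*} [Semiring R] [AddCommMonoid M]
    [AddCommMonoid N] [Module R M] [Module R N] {f : M → N} (hf : IsLinearMap R f)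
    (X Y : Set M) : f '' (X + Y) = f '' X + f '' Y :=
  Set.image_add (hf.mk' f)

def restrict (J : Finset ℕ) (σ : Vec) : Vec := fun j => if j ∈ J then σ j else 0

lemma isLinearMap_restrict (J : Finset ℕ) : IsLinearMap ℝ (restrict J) := by
  constructor <;> intros <;> funext j <;> by_cases j ∈ J <;> simp [restrict, *]

lemma sum_restrict {J W : Finset ℕ} (h : W ⊆ J) (σ : Vec) :
    ∑ j ∈ W, restrict J σ j = ∑ j ∈ W, σ j :=
  Finset.sum_congr rfl fun _ hj => if_pos (h hj)

lemma restrict_image_suppCone {J K : Finset ℕ} (h : J ⊆ K) :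
    restrict J '' suppCone K = suppCone J := by
  refine Set.Subset.antisymm ?_ fun τ hτ => ⟨τ, suppCone_mono h hτ, ?_⟩
  · rintro _ ⟨σ, hσ, rfl⟩
    exact ⟨fun j => by by_cases hj : j ∈ J <;> simp [restrict, hj, hσ.1 j],
      fun j hj => by simp [restrict, hj]⟩
  · funext j
    by_cases hj : j ∈ J <;> simp [restrict, hj, hτ.2 j]

namespace IsCharPoly

variable {J : Finset ℕ} {d : ℕ} {Δ : Set Vec}

lemma subset_suppCone (h : IsCharPoly J d Δ) : Δ ⊆ suppCone J := by
  obtain ⟨A, hA, rfl⟩ := h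
  rw [posHull_eq_add]
  rintro _ ⟨x, hx, y, hy, rfl⟩
  exact add_mem_suppCone (convexHull_min (fun a ha => (hA ha).1) (convex_suppCone J) hx) hy

lemma convex (h : IsCharPoly J d Δ) : Convex ℝ Δ := by
  obtain ⟨A, -, rfl⟩ := h
  rw [posHull_eq_add]
  exact (convex_convexHull ℝ A).add (convex_suppCone J)

lemma add_suppCone_eq (h : IsCharPoly J d Δ) : Δ + suppCone J = Δ := by
  obtain ⟨A, -, rfl⟩ := h
  rw [posHull_eq_add, add_assoc, add_suppCone_eq_suppCone subset_rfl (zero_mem_suppCone J)]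

end IsCharPoly

lemma le_contactExp_iff {J : Finset ℕ} {Δ : Set Vec} (hJ : J ≠ ∅) (hne : Δ.Nonempty)
    (hΔ : Δ ⊆ suppCone J) {c : ℝ} :
    c ≤ contactExp J Δ ↔ ∀ σ ∈ Δ, c ≤ ∑ j ∈ J, σ j := by
  have hbdd : BddBelow ((fun σ => ∑ j ∈ J, σ j) '' Δ) :=
    ⟨0, by rintro _ ⟨σ, hσ, rfl⟩; exact Finset.sum_nonneg fun j _ => (hΔ hσ).1 j⟩
  rw [contactExp, if_neg hJ, le_csInf_iff hbdd (hne.image _), Set.forall_mem_image]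

namespace PolySys

variable (D : PolySys) {J K : Finset ℕ}

lemma Δ_subset_suppCone (hJ : J ∈ D.F.H) : D.Δ J ⊆ suppCone J :=
  (D.char J hJ).subset_suppCone

lemma restrict_image_Δ (hJ : J ∈ D.F.H) (hK : K ∈ D.F.H) (hJK : J ⊆ K) :
    restrict J '' D.Δ K = D.Δ J :=
  (D.compat J hJ K hK hJK).symm

lemma mem_Sing_iff :
    J ∈ Sing D ↔ J ∈ D.F.H ∧ J ≠ ∅ ∧ ∀ σ ∈ D.Δ J, 1 ≤ ∑ j ∈ J, σ j := by
  by_cases hJ : J = ∅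
  · simp [Sing, contactExp, hJ]
  · simp only [Sing, Set.mem_ofPred_eq, ne_eq, hJ, not_false_eq_true, true_and]
    exact and_congr_right fun hJH =>
      le_contactExp_iff hJ (D.nonempty J hJH) (D.Δ_subset_suppCone hJH)

variable {D}

lemma one_le_sum_of_mem_Sing (hJ : J ∈ Sing D) (hK : K ∈ D.F.H) (hJK : J ⊆ K) {σ : Vec}
    (hσ : σ ∈ D.Δ K) : 1 ≤ ∑ j ∈ J, σ j := by
  obtain ⟨hJH, -, hsum⟩ := D.mem_Sing_iff.1 hJ
  rw [← sum_restrict subset_rfl]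
  exact hsum _ (D.restrict_image_Δ hJH hK hJK ▸ Set.mem_image_of_mem _ hσ)

lemma mem_Sing_of_subset (hJ : J ∈ Sing D) (hK : K ∈ D.F.H) (hJK : J ⊆ K) : K ∈ Sing D := by
  refine D.mem_Sing_iff.2 ⟨hK, ?_, fun σ hσ => ?_⟩
  · rintro rfl
    exact (D.mem_Sing_iff.1 hJ).2.1 (Finset.subset_empty.1 hJK)
  · exact (one_le_sum_of_mem_Sing hJ hK hJK hσ).trans
      (Finset.sum_le_sum_of_subset_of_nonneg hJK fun j _ _ => (D.Δ_subset_suppCone hK hσ).1 j)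

end PolySys

section Blowup

variable {J J' J₁ J₂ : Finset ℕ} {inf : ℕ}

lemma blowdown_of_mem (hi : inf ∈ J') : blowdown J inf J' = J'.erase inf ∪ J := if_pos hi

lemma blowdown_of_notMem (hi : inf ∉ J') : blowdown J inf J' = J' := if_neg hi

lemma erase_subset_blowdown : J'.erase inf ⊆ blowdown J inf J' := by
  by_cases hi : inf ∈ J'
  · rw [blowdown_of_mem hi]; exact Finset.subset_union_left
  · rw [blowdown_of_notMem hi, Finset.erase_eq_of_notMem hi]

lemma subset_insert_blowdown : J' ⊆ insert inf (blowdown J inf J') :=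
  fun j hj => by
    by_cases h : j = inf
    · exact h ▸ Finset.mem_insert_self _ _
    · exact Finset.mem_insert_of_mem (erase_subset_blowdown (Finset.mem_erase.2 ⟨h, hj⟩))

lemma blowdown_mono (h : J₁ ⊆ J₂) : blowdown J inf J₁ ⊆ blowdown J inf J₂ := by
  by_cases h₁ : inf ∈ J₁
  · rw [blowdown_of_mem h₁, blowdown_of_mem (h h₁)]
    exact Finset.union_subset_union (Finset.erase_subset_erase _ h) subset_rfl
  · rw [blowdown_of_notMem h₁, ← Finset.erase_eq_of_notMem h₁]
    exact (Finset.erase_subset_erase _ h).trans erase_subset_blowdown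

lemma mem_blowupH_iff {H : Set (Finset ℕ)} (hH : ∀ K ∈ H, inf ∉ K) (hJ : inf ∉ J) :
    J' ∈ blowupH H J inf ↔ blowdown J inf J' ∈ H ∧ ¬J ⊆ J' := by
  constructor
  · rintro (⟨hK, hJK⟩ | ⟨K, ⟨hK, hJK⟩, A, hA, rfl⟩)
    · rw [blowdown_of_notMem (hH _ hK)]
      exact ⟨hK, hJK⟩
    · have hiK := hH K hK
      have hAJ := hA.subset
      rw [blowdown_of_mem (by simp)]
      refine ⟨?_, fun hsub => ?_⟩
      · convert hK using 1
        ext x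
        by_cases hx : x = inf
        · subst hx; simp [hiK, hJ]
        · simp only [Finset.mem_union, Finset.mem_erase, Finset.mem_sdiff, Finset.mem_singleton]
          have := @hAJ x; have := @hJK x
          tauto
      · obtain ⟨y, hyJ, hyA⟩ := Finset.exists_of_ssubset hA
        have := hsub hyJ
        simp only [Finset.mem_union, Finset.mem_sdiff, Finset.mem_singleton] at this
        rcases this with (⟨-, h⟩ | h) | rfl
        exacts [h hyJ, hyA h, hJ hyJ]
  · rintro ⟨hK, hJJ'⟩
    by_cases hi : inf ∈ J'
    · refine Or.inr ⟨_, ⟨hK, by rw [blowdown_of_mem hi]; exact Finset.subset_union_right⟩,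
        J' ∩ J, Finset.ssubset_iff_subset_ne.2 ⟨Finset.inter_subset_right,
          fun h => hJJ' (h ▸ Finset.inter_subset_left)⟩, ?_⟩
      ext x
      by_cases hx : x = inf
      · subst hx; simp [hi]
      · simp only [blowdown_of_mem hi, Finset.mem_union, Finset.mem_erase, Finset.mem_sdiff,
          Finset.mem_inter, Finset.mem_singleton]
        tauto
    · rw [blowdown_of_notMem hi] at hK
      exact Or.inl ⟨hK, hJJ'⟩

lemma Fabric.mem_blowupH_iff {F : Fabric} (hJ : J ∈ F.H) (hinf : inf ∉ F.I) :
    J' ∈ blowupH F.H J inf ↔ blowdown J inf J' ∈ F.H ∧ ¬J ⊆ J' :=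
  RedSing.mem_blowupH_iff (fun K hK h => hinf (F.mem_sub K hK h))
    (fun h => hinf (F.mem_sub J hJ h))

def Fabric.blowup (F : Fabric) (J : Finset ℕ) (inf : ℕ) (hJ : J ∈ F.H) (hinf : inf ∉ F.I) :
    Fabric where
  I := insert inf F.I
  I_nonempty := Finset.insert_nonempty _ _
  H := blowupH F.H J inf
  mem_sub _ h := subset_insert_blowdown.trans
    (Finset.insert_subset_insert _ (F.mem_sub _ ((F.mem_blowupH_iff hJ hinf).1 h).1))
  downward _ h _ h' := by
    rw [F.mem_blowupH_iff hJ hinf] at h ⊢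
    exact ⟨F.downward _ h.1 _ (blowdown_mono h'), fun hJ' => h.2 (hJ'.trans h')⟩

end Blowup

section CharTransform

variable {J K J' J₁ J₂ : Finset ℕ} {inf : ℕ}

lemma isLinearMap_lamMap (J J' : Finset ℕ) (inf : ℕ) : IsLinearMap ℝ (lamMap J J' inf) := by
  constructor <;> intros <;> funext j <;> by_cases j = inf <;> by_cases j ∈ J' <;>
    simp [lamMap, *, Finset.sum_add_distrib, Finset.mul_sum]

lemma lamMap_image_suppCone_subset (hi : inf ∈ J') :
    lamMap J J' inf '' suppCone K ⊆ suppCone J' := by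
  rintro _ ⟨σ, hσ, rfl⟩
  refine ⟨fun j => ?_, fun j hj => ?_⟩
  · by_cases h : j = inf
    · simp only [lamMap, if_pos h]
      exact Finset.sum_nonneg fun i _ => hσ.1 i
    · by_cases h' : j ∈ J' <;> simp [lamMap, h, h', hσ.1 j]
  · have h : j ≠ inf := fun hh => hj (hh ▸ hi)
    simp [lamMap, h, hj]

lemma lamMap_sub_eVec_apply_of_ne {j : ℕ} (hj : j ≠ inf) (σ : Vec) :
    (lamMap J J' inf σ - eVec inf) j = if j ∈ J' then σ j else 0 := by
  simp [lamMap, eVec, hj]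

lemma lamMap_sub_eVec_apply_self (σ : Vec) :
    (lamMap J J' inf σ - eVec inf) inf = ∑ i ∈ J, σ i - 1 := by
  simp [lamMap, eVec]

lemma sum_lamMap_sub_eVec_of_notMem {W : Finset ℕ} (hW : W ⊆ J') (hi : inf ∉ W) (σ : Vec) :
    ∑ j ∈ W, (lamMap J J' inf σ - eVec inf) j = ∑ j ∈ W, σ j :=
  Finset.sum_congr rfl fun j hj => by
    rw [lamMap_sub_eVec_apply_of_ne (ne_of_mem_of_not_mem hj hi), if_pos (hW hj)]

lemma sum_lamMap_sub_eVec (hi : inf ∈ J') (σ : Vec) :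
    ∑ j ∈ J', (lamMap J J' inf σ - eVec inf) j =
      ∑ j ∈ J'.erase inf, σ j + ∑ i ∈ J, σ i - 1 := by
  rw [← Finset.sum_erase_add _ _ hi, lamMap_sub_eVec_apply_self,
    sum_lamMap_sub_eVec_of_notMem (Finset.erase_subset _ _) (Finset.notMem_erase _ _)]
  ring

lemma lamMap_sub_eVec_mem_latticePts {d : ℕ} (hd : 0 < d) (hi : inf ∈ J') {a : Vec}
    (ha : a ∈ latticePts K d) (hsum : 1 ≤ ∑ i ∈ J, a i) :
    lamMap J J' inf a - eVec inf ∈ latticePts J' d := by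
  obtain ⟨⟨hpos, -⟩, hrat⟩ := ha
  choose m hm using hrat
  have hd' : (0 : ℝ) < d := Nat.cast_pos.2 hd
  have hS : ∑ i ∈ J, a i = ((∑ i ∈ J, m i : ℕ) : ℝ) / d := by
    push_cast
    rw [Finset.sum_div]
    exact Finset.sum_congr rfl fun i _ => hm i
  have hdm : d ≤ ∑ i ∈ J, m i := by
    rw [hS, le_div_iff₀ hd', one_mul] at hsum
    exact_mod_cast hsum
  refine ⟨⟨fun j => ?_, fun j hj => ?_⟩, fun j => ?_⟩
  · by_cases hj : j = inf
    · rw [hj, lamMap_sub_eVec_apply_self]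
      linarith
    · rw [lamMap_sub_eVec_apply_of_ne hj]
      split_ifs <;> simp [hpos j]
  · rw [lamMap_sub_eVec_apply_of_ne (by rintro rfl; exact hj hi), if_neg hj]
  · by_cases hj : j = inf
    · refine ⟨∑ i ∈ J, m i - d, ?_⟩
      rw [hj, lamMap_sub_eVec_apply_self, hS, Nat.cast_sub hdm]
      field_simp
    · rw [lamMap_sub_eVec_apply_of_ne hj]
      split_ifs
      exacts [⟨m j, hm j⟩, ⟨0, by simp⟩]

lemma restrict_lamMap_of_notMem (h : J₁ ⊆ J₂) (hi : inf ∉ J₁) (σ : Vec) :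
    restrict J₁ (lamMap J J₂ inf σ) = restrict J₁ σ := by
  funext j
  by_cases hj : j ∈ J₁
  · simp [restrict, lamMap, hj, h hj, show j ≠ inf from fun h => hi (h ▸ hj)]
  · simp [restrict, hj]

lemma restrict_lamMap_of_mem (h : J₁ ⊆ J₂) (hi : inf ∈ J₁) (σ : Vec) :
    restrict J₁ (lamMap J J₂ inf σ) =
      lamMap J J₁ inf (restrict (blowdown J inf J₁) σ) := by
  funext j
  by_cases hj : j = inf
  · subst hj
    simp only [restrict, lamMap, if_pos hi]
    refine (Finset.sum_congr rfl fun i hi' => if_pos ?_).symm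
    rw [blowdown_of_mem hi]
    exact Finset.mem_union_right _ hi'
  · by_cases hj' : j ∈ J₁
    · have : j ∈ blowdown J inf J₁ := erase_subset_blowdown (Finset.mem_erase.2 ⟨hj, hj'⟩)
      simp [restrict, lamMap, hj, hj', h hj', this]
    · simp [restrict, lamMap, hj, hj']

lemma restrict_eVec_of_mem (hi : inf ∈ J₁) : restrict J₁ (eVec inf) = eVec inf := by
  funext j
  by_cases hj : j ∈ J₁
  · simp [restrict, hj]
  · simp [restrict, eVec, hj, show j ≠ inf from fun h => hj (h ▸ hi)]

lemma restrict_eVec_of_notMem (hi : inf ∉ J₁) : restrict J₁ (eVec inf) = 0 := by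
  funext j
  by_cases hj : j ∈ J₁
  · simp [restrict, eVec, hj, show j ≠ inf from fun h => hi (h ▸ hj)]
  · simp [restrict, hj]

variable (D : PolySys)

lemma charΔ_of_notMem (hi : inf ∉ J') : charΔ D J inf J' = D.Δ J' := if_neg hi

lemma charΔ_of_mem (hi : inf ∈ J') (hK : blowdown J inf J' ∈ D.F.H) :
    charΔ D J inf J' =
      lamMap J J' inf '' D.Δ (blowdown J inf J') + {-eVec inf} + suppCone J' := by
  rw [charΔ, if_pos hi, image_sub_const_eq_add, posHull_eq_add,
    ← (isLinearMap_lamMap J J' inf).image_convexHull, (D.char _ hK).convex.convexHull_eq,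
    add_right_comm]

lemma lamMap_sub_eVec_mem_charΔ (hi : inf ∈ J') (hK : blowdown J inf J' ∈ D.F.H) {σ : Vec}
    (hσ : σ ∈ D.Δ (blowdown J inf J')) :
    lamMap J J' inf σ - eVec inf ∈ charΔ D J inf J' := by
  rw [charΔ_of_mem D hi hK]
  exact ⟨_, Set.add_mem_add (Set.mem_image_of_mem _ hσ) rfl, 0, zero_mem_suppCone J',
    by simp only [add_zero, sub_eq_add_neg]⟩

lemma isCharPoly_charΔ (hJ : J ∈ Sing D) (hi : inf ∈ J') (hK : blowdown J inf J' ∈ D.F.H) :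
    IsCharPoly J' D.d (charΔ D J inf J') := by
  have hJK : J ⊆ blowdown J inf J' := by rw [blowdown_of_mem hi]; exact Finset.subset_union_right
  obtain ⟨A, hA, hΔ⟩ := D.char _ hK
  refine ⟨(fun a => lamMap J J' inf a - eVec inf) '' A, ?_, ?_⟩
  · rintro _ ⟨a, haA, rfl⟩
    refine lamMap_sub_eVec_mem_latticePts D.d_pos hi (hA haA)
      (PolySys.one_le_sum_of_mem_Sing hJ hK hJK ?_)
    rw [hΔ, posHull_eq_add]
    exact ⟨a, subset_convexHull ℝ A haA, 0, zero_mem_suppCone _, add_zero a⟩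
  · have hlin := isLinearMap_lamMap J J' inf
    have habsorb : lamMap J J' inf '' suppCone (blowdown J inf J') + suppCone J' = suppCone J' :=
      add_suppCone_eq_suppCone (lamMap_image_suppCone_subset hi)
        ⟨0, zero_mem_suppCone _, hlin.map_zero⟩
    rw [posHull_eq_add, charΔ_of_mem D hi hK, ← Set.image_image (fun σ => σ - eVec inf),
      image_sub_const_eq_add, convexHull_add, convexHull_singleton, hΔ, posHull_eq_add,
      hlin.image_add, hlin.image_convexHull, add_right_comm _ _ {-eVec inf},
      add_assoc _ _ (suppCone J'), habsorb]

lemma charΔ_nonempty (hi : inf ∈ J') (hK : blowdown J inf J' ∈ D.F.H) :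
    (charΔ D J inf J').Nonempty :=
  let ⟨_, hσ⟩ := D.nonempty _ hK
  ⟨_, lamMap_sub_eVec_mem_charΔ D hi hK hσ⟩

lemma charΔ_compat (hJ : J ∈ D.F.H) (hinf : inf ∉ D.F.I) (h₁ : J₁ ∈ blowupH D.F.H J inf)
    (h₂ : J₂ ∈ blowupH D.F.H J inf) (h12 : J₁ ⊆ J₂) :
    charΔ D J inf J₁ = restrict J₁ '' charΔ D J inf J₂ := by
  rw [D.F.mem_blowupH_iff hJ hinf] at h₁ h₂
  have hlin := isLinearMap_restrict J₁
  by_cases hi₂ : inf ∈ J₂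
  · rw [charΔ_of_mem D hi₂ h₂.1, hlin.image_add, hlin.image_add, Set.image_singleton,
      hlin.map_neg, restrict_image_suppCone h12, Set.image_image]
    by_cases hi₁ : inf ∈ J₁
    · rw [charΔ_of_mem D hi₁ h₁.1, restrict_eVec_of_mem hi₁,
        ← D.restrict_image_Δ h₁.1 h₂.1 (blowdown_mono h12), Set.image_image]
      simp_rw [restrict_lamMap_of_mem h12 hi₁]
    · rw [blowdown_of_notMem hi₁] at h₁
      have hsub : J₁ ⊆ blowdown J inf J₂ :=
        (Finset.subset_erase.2 ⟨h12, hi₁⟩).trans erase_subset_blowdown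
      rw [charΔ_of_notMem D hi₁, restrict_eVec_of_notMem hi₁, neg_zero, Set.singleton_zero,
        add_zero]
      simp_rw [restrict_lamMap_of_notMem h12 hi₁]
      rw [D.restrict_image_Δ h₁.1 h₂.1 hsub, (D.char _ h₁.1).add_suppCone_eq]
  · have hi₁ : inf ∉ J₁ := fun h => hi₂ (h12 h)
    rw [blowdown_of_notMem hi₁] at h₁
    rw [blowdown_of_notMem hi₂] at h₂
    rw [charΔ_of_notMem D hi₁, charΔ_of_notMem D hi₂]
    exact D.compat J₁ h₁.1 J₂ h₂.1 h12

lemma exists_isCharTransformAt (hJ : J ∈ Sing D) (hinf : inf ∉ D.F.I) :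
    ∃ D', IsCharTransformAt D D' J inf := by
  have hmem {J'} (h : J' ∈ blowupH D.F.H J inf) : blowdown J inf J' ∈ D.F.H :=
    ((D.F.mem_blowupH_iff hJ.1 hinf).1 h).1
  refine ⟨{ F := D.F.blowup J inf hJ.1 hinf
            d := D.d
            d_pos := D.d_pos
            Δ := charΔ D J inf
            char := fun J' hJ' => ?_
            nonempty := fun J' hJ' => ?_
            compat := fun J₁ h₁ J₂ h₂ h12 => charΔ_compat D hJ.1 hinf h₁ h₂ h12 },
    hJ, rfl, hinf, rfl, rfl, fun _ _ => rfl⟩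
  · by_cases hi : inf ∈ J'
    · exact isCharPoly_charΔ D hJ hi (hmem hJ')
    · rw [charΔ_of_notMem D hi]
      exact D.char J' (blowdown_of_notMem hi ▸ hmem hJ')
  · by_cases hi : inf ∈ J'
    · exact charΔ_nonempty D hi (hmem hJ')
    · rw [charΔ_of_notMem D hi]
      exact D.nonempty J' (blowdown_of_notMem hi ▸ hmem hJ')

end CharTransform

section Projection

lemma mem_projH_iff {F : Fabric} {T J : Finset ℕ} :
    J ∈ projH F T ↔ J ∪ T ∈ F.H ∧ Disjoint J T := by
  constructor
  · rintro ⟨K, ⟨hK, hTK⟩, rfl⟩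
    exact ⟨by rwa [Finset.sdiff_union_of_subset hTK], Finset.sdiff_disjoint⟩
  · rintro ⟨h, hd⟩
    exact ⟨J ∪ T, ⟨h, Finset.subset_union_right⟩,
      (Finset.union_sdiff_cancel_right hd).symm⟩

variable {T U W : Finset ℕ} {σ ξ ξ₀ c : Vec} {j : ℕ}

lemma hironakaProj_apply_of_mem (hj : j ∈ U \ T) :
    hironakaProj T U σ j = σ j / (1 - ∑ i ∈ T, σ i) := if_pos hj

lemma hironakaProj_apply_of_notMem (hj : j ∉ U \ T) : hironakaProj T U σ j = 0 := if_neg hj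

lemma sum_hironakaProj (hW : W ⊆ U \ T) :
    ∑ j ∈ W, hironakaProj T U σ j = (∑ j ∈ W, σ j) / (1 - ∑ i ∈ T, σ i) := by
  rw [Finset.sum_div]
  exact Finset.sum_congr rfl fun j hj => hironakaProj_apply_of_mem (hW hj)

lemma one_le_sum_hironakaProj_iff (hTU : T ⊆ U) (ht : ∑ i ∈ T, σ i < 1) :
    1 ≤ ∑ j ∈ U \ T, hironakaProj T U σ j ↔ 1 ≤ ∑ j ∈ U, σ j := by
  rw [sum_hironakaProj subset_rfl, le_div_iff₀ (by linarith), one_mul,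
    Finset.sum_sdiff_eq_sub hTU]
  constructor <;> intro <;> linarith

lemma hironakaProj_add_smul (hc : ∀ j ∉ U \ T, c j = 0) (ht : ∑ i ∈ T, ξ i < 1) :
    hironakaProj T U (ξ + (1 - ∑ i ∈ T, ξ i) • c) = hironakaProj T U ξ + c := by
  have hcT : ∀ i ∈ T, c i = 0 := fun i hi => hc i fun h => (Finset.mem_sdiff.1 h).2 hi
  have hsum : ∑ i ∈ T, (ξ + (1 - ∑ i ∈ T, ξ i) • c) i = ∑ i ∈ T, ξ i := by
    simp [Finset.sum_add_distrib, ← Finset.mul_sum, Finset.sum_eq_zero hcT]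
  have hpos : 1 - ∑ i ∈ T, ξ i ≠ 0 := by linarith
  funext j
  by_cases hj : j ∈ U \ T
  · rw [Pi.add_apply, hironakaProj_apply_of_mem hj, hironakaProj_apply_of_mem hj, hsum]
    simp only [Pi.add_apply, Pi.smul_apply, smul_eq_mul]
    field_simp
  · simp [hironakaProj_apply_of_notMem hj, hc j hj]

lemma hironakaProj_le_hironakaProj (h₀ : ∀ j ∈ U \ T, 0 ≤ ξ₀ j) (hle : ξ₀ ≤ ξ)
    (ht : ∑ i ∈ T, ξ i < 1) : hironakaProj T U ξ₀ ≤ hironakaProj T U ξ := by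
  have ht₀ : ∑ i ∈ T, ξ₀ i ≤ ∑ i ∈ T, ξ i := Finset.sum_le_sum fun i _ => hle i
  intro j
  by_cases hj : j ∈ U \ T
  · rw [hironakaProj_apply_of_mem hj, hironakaProj_apply_of_mem hj]
    calc ξ₀ j / (1 - ∑ i ∈ T, ξ₀ i) ≤ ξ₀ j / (1 - ∑ i ∈ T, ξ i) :=
          div_le_div_of_nonneg_left (h₀ j hj) (by linarith) (by linarith)
      _ ≤ ξ j / (1 - ∑ i ∈ T, ξ i) := div_le_div_of_nonneg_right (hle j) (by linarith)
  · rw [hironakaProj_apply_of_notMem hj, hironakaProj_apply_of_notMem hj]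

lemma hironakaProj_sub_mem_suppCone (h₀ : ∀ j ∈ U \ T, 0 ≤ ξ₀ j) (hle : ξ₀ ≤ ξ)
    (ht : ∑ i ∈ T, ξ i < 1) :
    hironakaProj T U ξ - hironakaProj T U ξ₀ ∈ suppCone (U \ T) :=
  ⟨fun j => sub_nonneg.2 (hironakaProj_le_hironakaProj h₀ hle ht j), fun j hj => by
    simp [hironakaProj_apply_of_notMem hj]⟩

end Projection

section SingularLocus

variable {D E : PolySys} {T J : Finset ℕ}

lemma IsHironakaProjection.union_mem_Sing (h : IsHironakaProjection D E T) (hJ : J ∈ Sing E) :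
    J ∪ T ∈ Sing D ∧ Disjoint J T := by
  obtain ⟨hJE, hJne, hsum⟩ := E.mem_Sing_iff.1 hJ
  obtain ⟨hJD, hd⟩ := mem_projH_iff.1 (h.2.1 ▸ hJE)
  refine ⟨D.mem_Sing_iff.2 ⟨hJD, fun h' => hJne (Finset.union_eq_empty.1 h').1,
    fun σ hσ => ?_⟩, hd⟩
  by_cases ht : ∑ i ∈ T, σ i < 1
  · rw [← one_le_sum_hironakaProj_iff Finset.subset_union_right ht,
      Finset.union_sdiff_cancel_right hd]
    exact hsum _ (h.2.2.2 J hJE ▸ ⟨σ, ⟨hσ, ht⟩, rfl⟩)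
  · exact (not_lt.1 ht).trans (Finset.sum_le_sum_of_subset_of_nonneg Finset.subset_union_right
      fun j _ _ => (D.Δ_subset_suppCone hJD hσ).1 j)

lemma HasMaximalContact.subset_of_mem_Sing (hmc : HasMaximalContact D T) (hJ : J ∈ Sing D) :
    T ⊆ J := by
  intro j hj
  obtain ⟨σ, hσ, -, hσj⟩ := hmc.2 J hJ hj
  by_contra hjJ
  exact hσj ((D.Δ_subset_suppCone hJ.1 hσ).2 j hjJ)

lemma IsHironakaProjection.sdiff_mem_Sing (h : IsHironakaProjection D E T) (hT : T ∉ Sing D)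
    (hmc : HasMaximalContact D T) (hJ : J ∈ Sing D) : J \ T ∈ Sing E := by
  have hTJ := hmc.subset_of_mem_Sing hJ
  have hJE : J \ T ∈ E.F.H := h.2.1 ▸ ⟨J, ⟨hJ.1, hTJ⟩, rfl⟩
  refine E.mem_Sing_iff.2 ⟨hJE, fun h' => hT ?_, ?_⟩
  · rwa [← Finset.Subset.antisymm (Finset.sdiff_eq_empty_iff_subset.1 h') hTJ]
  · rw [h.2.2.2 _ hJE, projΔ, Finset.sdiff_union_of_subset hTJ]
    rintro _ ⟨σ, ⟨hσ, ht⟩, rfl⟩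
    exact (one_le_sum_hironakaProj_iff hTJ ht).2
      (PolySys.one_le_sum_of_mem_Sing hJ hJ.1 subset_rfl hσ)

end SingularLocus

section Commutation

variable {T Js J'' : Finset ℕ} {inf : ℕ}

lemma blowdown_union_right (hiT : inf ∉ T) :
    blowdown (Js ∪ T) inf (J'' ∪ T) = blowdown Js inf J'' ∪ T := by
  by_cases hi : inf ∈ J''
  · rw [blowdown_of_mem hi, blowdown_of_mem (Finset.mem_union_left _ hi),
      Finset.erase_union_distrib, Finset.erase_eq_of_notMem hiT]
    ext x; simp only [Finset.mem_union]; tauto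
  · rw [blowdown_of_notMem hi, blowdown_of_notMem fun h => (Finset.mem_union.1 h).elim hi hiT]

lemma blowdown_subset_union : blowdown Js inf J'' ⊆ J'' ∪ Js := by
  by_cases hi : inf ∈ J''
  · rw [blowdown_of_mem hi]
    exact Finset.union_subset_union (Finset.erase_subset _ _) subset_rfl
  · rw [blowdown_of_notMem hi]
    exact Finset.subset_union_left

lemma disjoint_blowdown_iff (hJs : Disjoint Js T) (hiT : inf ∉ T) :
    Disjoint (blowdown Js inf J'') T ↔ Disjoint J'' T :=
  ⟨fun h => (Finset.disjoint_insert_left.2 ⟨hiT, h⟩).mono_left subset_insert_blowdown,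
    fun h => (Finset.disjoint_union_left.2 ⟨h, hJs⟩).mono_left blowdown_subset_union⟩

lemma hironakaProj_lamMap_sub_eVec (hi : inf ∈ J'') (hiT : inf ∉ T) (hJs : Disjoint Js T)
    (hJ'' : Disjoint J'' T) {σ : Vec} (ht : ∑ i ∈ T, σ i < 1) :
    hironakaProj T (J'' ∪ T) (lamMap (Js ∪ T) (J'' ∪ T) inf σ - eVec inf)
      = lamMap Js J'' inf (hironakaProj T (blowdown Js inf J'' ∪ T) σ) - eVec inf := by
  have hsumT :
      ∑ i ∈ T, (lamMap (Js ∪ T) (J'' ∪ T) inf σ - eVec inf) i = ∑ i ∈ T, σ i :=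
    sum_lamMap_sub_eVec_of_notMem Finset.subset_union_right hiT σ
  have hden : 1 - ∑ i ∈ T, σ i ≠ 0 := by linarith
  have hK : (blowdown Js inf J'' ∪ T) \ T = blowdown Js inf J'' :=
    Finset.union_sdiff_cancel_right ((disjoint_blowdown_iff hJs hiT).2 hJ'')
  have hJ''T : (J'' ∪ T) \ T = J'' := Finset.union_sdiff_cancel_right hJ''
  funext j
  by_cases hj : j = inf
  · subst hj
    have hJsK : Js ⊆ (blowdown Js j J'' ∪ T) \ T := by
      rw [hK, blowdown_of_mem hi]; exact Finset.subset_union_right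
    rw [hironakaProj_apply_of_mem (by rwa [hJ''T]), hsumT, lamMap_sub_eVec_apply_self,
      lamMap_sub_eVec_apply_self, sum_hironakaProj hJsK, Finset.sum_union hJs]
    field_simp
    ring
  · rw [lamMap_sub_eVec_apply_of_ne hj]
    by_cases hjJ : j ∈ J''
    · have hjK : j ∈ (blowdown Js inf J'' ∪ T) \ T := by
        rw [hK]; exact erase_subset_blowdown (Finset.mem_erase.2 ⟨hj, hjJ⟩)
      rw [if_pos hjJ, hironakaProj_apply_of_mem (by rwa [hJ''T]), hsumT,
        lamMap_sub_eVec_apply_of_ne hj, if_pos (Finset.mem_union_left _ hjJ),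
        hironakaProj_apply_of_mem hjK]
    · rw [if_neg hjJ, hironakaProj_apply_of_notMem (by rwa [hJ''T])]

lemma lamMap_image_hironakaProj_subset {Δ : Set Vec} (hi : inf ∈ J'') (hiT : inf ∉ T)
    (hJs : Disjoint Js T) (hJ'' : Disjoint J'' T) :
    lamMap Js J'' inf '' (hironakaProj T (blowdown Js inf J'' ∪ T) ''
        {σ | σ ∈ Δ ∧ ∑ i ∈ T, σ i < 1}) + {-eVec inf} + suppCone J'' ⊆
      hironakaProj T (J'' ∪ T) ''
        {ξ | ξ ∈ lamMap (Js ∪ T) (J'' ∪ T) inf '' Δ + {-eVec inf} + suppCone (J'' ∪ T)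
          ∧ ∑ i ∈ T, ξ i < 1} := by
  rintro _ ⟨_, ⟨_, ⟨_, ⟨σ, ⟨hσ, ht⟩, rfl⟩, rfl⟩, _, rfl, rfl⟩, c, hc, rfl⟩
  have hsumT := sum_lamMap_sub_eVec_of_notMem (J := Js ∪ T) (J' := J'' ∪ T)
    Finset.subset_union_right hiT σ
  have hcT : ∀ i ∈ T, c i = 0 := fun i hi => hc.2 i (Finset.disjoint_right.1 hJ'' hi)
  have hc' : ∀ j ∉ (J'' ∪ T) \ T, c j = 0 := by
    rw [Finset.union_sdiff_cancel_right hJ'']; exact hc.2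
  set ξ₀ := lamMap (Js ∪ T) (J'' ∪ T) inf σ - eVec inf with hξ₀
  have hsum : ∑ i ∈ T, (ξ₀ + (1 - ∑ i ∈ T, σ i) • c) i = ∑ i ∈ T, σ i := by
    rw [← hsumT]
    exact Finset.sum_congr rfl fun i hi => by simp [hξ₀, hcT i hi]
  -- rescaling `c` by the denominator of `∇` makes it pass through `∇` unchanged
  refine ⟨ξ₀ + (1 - ∑ i ∈ T, σ i) • c, ⟨?_, by rwa [hsum]⟩, ?_⟩
  · exact ⟨_, Set.add_mem_add (Set.mem_image_of_mem _ hσ) rfl, _,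
      smul_mem_suppCone (sub_nonneg.2 ht.le) (suppCone_mono Finset.subset_union_left hc),
      by simp only [hξ₀, sub_eq_add_neg]⟩
  · rw [← hsumT, hironakaProj_add_smul hc' (by rwa [hsumT]),
      hironakaProj_lamMap_sub_eVec hi hiT hJs hJ'' ht, sub_eq_add_neg]

lemma hironakaProj_subset_lamMap_image {Δ : Set Vec} (hi : inf ∈ J'') (hiT : inf ∉ T)
    (hJs : Disjoint Js T) (hJ'' : Disjoint J'' T) (hnn : ∀ σ ∈ Δ, ∀ j, 0 ≤ σ j)
    (hsing : ∀ σ ∈ Δ, 1 ≤ ∑ i ∈ Js ∪ T, σ i) :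
    hironakaProj T (J'' ∪ T) ''
        {ξ | ξ ∈ lamMap (Js ∪ T) (J'' ∪ T) inf '' Δ + {-eVec inf} + suppCone (J'' ∪ T)
          ∧ ∑ i ∈ T, ξ i < 1} ⊆
      lamMap Js J'' inf '' (hironakaProj T (blowdown Js inf J'' ∪ T) ''
        {σ | σ ∈ Δ ∧ ∑ i ∈ T, σ i < 1}) + {-eVec inf} + suppCone J'' := by
  rintro _ ⟨_, ⟨⟨_, ⟨_, ⟨σ, hσ, rfl⟩, _, rfl, rfl⟩, c, hc, rfl⟩, ht⟩, rfl⟩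
  set ξ₀ := lamMap (Js ∪ T) (J'' ∪ T) inf σ - eVec inf with hξ₀
  have hξ : lamMap (Js ∪ T) (J'' ∪ T) inf σ + -eVec inf + c = ξ₀ + c := by
    rw [hξ₀, sub_eq_add_neg]
  beta_reduce at ht ⊢
  rw [hξ] at ht ⊢
  have hle : ξ₀ ≤ ξ₀ + c := fun j => le_add_of_nonneg_right (hc.1 j)
  have ht₀ : ∑ i ∈ T, σ i < 1 :=
    sum_lamMap_sub_eVec_of_notMem (J := Js ∪ T) (J' := J'' ∪ T) Finset.subset_union_right
      hiT σ ▸ (Finset.sum_le_sum fun i _ => hle i).trans_lt ht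
  have h₀ : ∀ j ∈ (J'' ∪ T) \ T, 0 ≤ ξ₀ j := by
    intro j _
    by_cases hj : j = inf
    · rw [hj, hξ₀, lamMap_sub_eVec_apply_self, sub_nonneg]
      exact hsing σ hσ
    · rw [hξ₀, lamMap_sub_eVec_apply_of_ne hj]
      split_ifs
      exacts [hnn σ hσ j, le_rfl]
  -- `∇ξ₀` is the transformed projection; by monotonicity of `∇` the rest lies in the cone
  refine ⟨_, ⟨_, ⟨_, ⟨σ, ⟨hσ, ht₀⟩, rfl⟩, rfl⟩, _, rfl, rfl⟩, _,
    Finset.union_sdiff_cancel_right hJ'' ▸ hironakaProj_sub_mem_suppCone h₀ hle ht, ?_⟩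
  beta_reduce
  rw [← sub_eq_add_neg, ← hironakaProj_lamMap_sub_eVec hi hiT hJs hJ'' ht₀, ← hξ₀]
  abel

/-- Hironaka's projection commutes with the characteristic transform. -/
lemma lamMap_image_projΔ (D : PolySys) (hJs : Js ∪ T ∈ Sing D) (hd : Disjoint Js T)
    (hi : inf ∈ J'') (hiT : inf ∉ T) (hJ'' : Disjoint J'' T)
    (hK : blowdown Js inf J'' ∪ T ∈ D.F.H) :
    lamMap Js J'' inf '' projΔ D T (blowdown Js inf J'') + {-eVec inf} + suppCone J'' =
      hironakaProj T (J'' ∪ T) ''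
        {ξ | ξ ∈ charΔ D (Js ∪ T) inf (J'' ∪ T) ∧ ∑ i ∈ T, ξ i < 1} := by
  have hbd := blowdown_union_right (Js := Js) (J'' := J'') hiT
  have hJsK : Js ∪ T ⊆ blowdown Js inf J'' ∪ T := by
    rw [blowdown_of_mem hi]
    exact Finset.union_subset_union Finset.subset_union_right subset_rfl
  rw [charΔ_of_mem D (Finset.mem_union_left _ hi) (hbd ▸ hK), hbd, projΔ]
  exact (lamMap_image_hironakaProj_subset hi hiT hd hJ'').antisymm
    (hironakaProj_subset_lamMap_image hi hiT hd hJ''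
      (fun σ hσ => (D.Δ_subset_suppCone hK hσ).1)
      (fun σ hσ => PolySys.one_le_sum_of_mem_Sing hJs hK hJsK hσ))

end Commutation

section Lifting

variable {D D' E E' : PolySys} {T J J' K Js : Finset ℕ} {inf : ℕ}

namespace IsCharTransformAt

lemma notMem_of_mem_H (h : IsCharTransformAt D D' J inf) (hK : K ∈ D.F.H) : inf ∉ K :=
  fun hi => h.2.2.1 (D.F.mem_sub K hK hi)

lemma mem_H_iff (h : IsCharTransformAt D D' J inf) :
    J' ∈ D'.F.H ↔ blowdown J inf J' ∈ D.F.H ∧ ¬J ⊆ J' := by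
  rw [h.2.2.2.2.1]
  exact D.F.mem_blowupH_iff h.1.1 h.2.2.1

lemma Δ_eq (h : IsCharTransformAt D D' J inf) (hJ' : J' ∈ D'.F.H) :
    D'.Δ J' = charΔ D J inf J' :=
  h.2.2.2.2.2 J' hJ'

lemma mem_Sing_iff_of_notMem (h : IsCharTransformAt D D' J inf) (hi : inf ∉ J') :
    J' ∈ Sing D' ↔ J' ∈ Sing D ∧ ¬J ⊆ J' := by
  have hH : J' ∈ D'.F.H ↔ J' ∈ D.F.H ∧ ¬J ⊆ J' := by
    rw [h.mem_H_iff, blowdown_of_notMem hi]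
  constructor
  · rintro ⟨hJ', h1⟩
    rw [h.Δ_eq hJ', charΔ_of_notMem D hi] at h1
    exact ⟨⟨(hH.1 hJ').1, h1⟩, (hH.1 hJ').2⟩
  · rintro ⟨⟨hJ'D, h1⟩, hn⟩
    have hJ' := hH.2 ⟨hJ'D, hn⟩
    refine ⟨hJ', ?_⟩
    rwa [h.Δ_eq hJ', charΔ_of_notMem D hi]

end IsCharTransformAt

lemma strictTangent_subset_strictTangent_charΔ (D : PolySys) (hi : inf ∈ J')
    (hK : blowdown J inf J' ∈ D.F.H)
    (hsing : ∀ τ ∈ charΔ D J inf J', 1 ≤ ∑ j ∈ J', τ j) :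
    strictTangent (blowdown J inf J') (D.Δ (blowdown J inf J')) ⊆
      strictTangent J' (charΔ D J inf J') := by
  rintro j ⟨σ, hσ, hσ1, hσj⟩
  have hnn : ∀ i, 0 ≤ σ i := (D.Δ_subset_suppCone hK hσ).1
  have hjK : j ∈ blowdown J inf J' := by
    by_contra h
    exact hσj ((D.Δ_subset_suppCone hK hσ).2 j h)
  have hτ := lamMap_sub_eVec_mem_charΔ D hi hK hσ
  have hWK : J'.erase inf ∩ J ⊆ blowdown J inf J' :=
    Finset.inter_subset_left.trans erase_subset_blowdown
  -- the transformed point only keeps the mass of `σ` on `J'.erase inf ∩ J`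
  have hsum :
      ∑ i ∈ J', (lamMap J J' inf σ - eVec inf) i = ∑ i ∈ J'.erase inf ∩ J, σ i := by
    have := Finset.sum_union_inter (s₁ := J'.erase inf) (s₂ := J) (f := σ)
    rw [blowdown_of_mem hi] at hσ1
    rw [sum_lamMap_sub_eVec hi]
    linarith
  have hjW : j ∈ J'.erase inf := by
    by_contra hj
    have hle : ∑ i ∈ J'.erase inf ∩ J, σ i ≤ ∑ i ∈ (blowdown J inf J').erase j, σ i :=
      Finset.sum_le_sum_of_subset_of_nonneg
        (fun i hi => Finset.mem_erase.2
          ⟨fun h => hj (h ▸ Finset.mem_of_mem_inter_left hi), hWK hi⟩)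
        fun i _ _ => hnn i
    rw [Finset.sum_erase_eq_sub hjK, hσ1, ← hsum] at hle
    linarith [hsing _ hτ, lt_of_le_of_ne (hnn j) (Ne.symm hσj)]
  refine ⟨_, hτ, le_antisymm ?_ (hsing _ hτ), ?_⟩
  · rw [hsum, ← hσ1]
    exact Finset.sum_le_sum_of_subset_of_nonneg hWK fun i _ _ => hnn i
  · rwa [lamMap_sub_eVec_apply_of_ne (Finset.ne_of_mem_erase hjW),
      if_pos (Finset.mem_of_mem_erase hjW)]

structure MaxContactProjection (D E : PolySys) (T : Finset ℕ) : Prop where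
  notMem_Sing : T ∉ Sing D
  hasMaximalContact : HasMaximalContact D T
  isHironakaProjection : IsHironakaProjection D E T

namespace MaxContactProjection

lemma disjoint (h : MaxContactProjection D E T) (hE : IsCharTransformAt E E' Js inf) :
    Disjoint Js T :=
  (h.isHironakaProjection.union_mem_Sing hE.1).2

lemma notMem_center (h : MaxContactProjection D E T) (hD : IsCharTransformAt D D' J inf) :
    inf ∉ T :=
  hD.notMem_of_mem_H h.hasMaximalContact.1

lemma charTransform_mem_H (h : MaxContactProjection D E T)
    (hE : IsCharTransformAt E E' Js inf) (hD : IsCharTransformAt D D' (Js ∪ T) inf) :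
    T ∈ D'.F.H := by
  refine hD.mem_H_iff.2 ⟨?_, fun hsub => ?_⟩
  · rw [blowdown_of_notMem (h.notMem_center hD)]
    exact h.hasMaximalContact.1
  · have hJs : Js = ∅ := (Finset.disjoint_self_iff_empty _).1
      ((h.disjoint hE).mono_right (Finset.union_subset_left hsub))
    exact (E.mem_Sing_iff.1 hE.1).2.1 hJs

lemma charTransform_notMem_Sing (h : MaxContactProjection D E T)
    (hD : IsCharTransformAt D D' (Js ∪ T) inf) : T ∉ Sing D' := fun hT =>
  h.notMem_Sing ((hD.mem_Sing_iff_of_notMem (h.notMem_center hD)).1 hT).1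

lemma charTransform_hasMaximalContact (h : MaxContactProjection D E T)
    (hE : IsCharTransformAt E E' Js inf) (hD : IsCharTransformAt D D' (Js ∪ T) inf) :
    HasMaximalContact D' T := by
  refine ⟨h.charTransform_mem_H hE hD, fun J hJ => ?_⟩
  have hmc := h.hasMaximalContact.2
  by_cases hi : inf ∈ J
  · have hK := (hD.mem_H_iff.1 hJ.1).1
    have hJs : Js ∪ T ∈ Sing D := hD.1
    have hKs : blowdown (Js ∪ T) inf J ∈ Sing D := PolySys.mem_Sing_of_subset hJs hK
      (by rw [blowdown_of_mem hi]; exact Finset.subset_union_right)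
    rw [hD.Δ_eq hJ.1]
    refine (hmc _ hKs).trans (strictTangent_subset_strictTangent_charΔ D hi hK fun τ hτ => ?_)
    exact (D'.mem_Sing_iff.1 hJ).2.2 τ (by rwa [hD.Δ_eq hJ.1])
  · rw [hD.Δ_eq hJ.1, charΔ_of_notMem D hi]
    exact hmc _ ((hD.mem_Sing_iff_of_notMem hi).1 hJ).1

lemma charTransform_H_eq (h : MaxContactProjection D E T)
    (hE : IsCharTransformAt E E' Js inf) (hD : IsCharTransformAt D D' (Js ∪ T) inf) :
    E'.F.H = projH D'.F T := by
  have hd := h.disjoint hE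
  ext J
  rw [hE.mem_H_iff, h.isHironakaProjection.2.1, mem_projH_iff, mem_projH_iff, hD.mem_H_iff,
    blowdown_union_right (h.notMem_center hD),
    disjoint_blowdown_iff hd (h.notMem_center hD)]
  have hsub : Js ∪ T ⊆ J ∪ T ↔ Js ⊆ J :=
    ⟨fun hs x hx => (Finset.mem_union.1 (hs (Finset.mem_union_left _ hx))).resolve_right
      (Finset.disjoint_left.1 hd hx), fun hs => Finset.union_subset_union hs subset_rfl⟩
  rw [hsub]
  tauto

lemma charTransform_Δ_eq (h : MaxContactProjection D E T)
    (hE : IsCharTransformAt E E' Js inf) (hD : IsCharTransformAt D D' (Js ∪ T) inf)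
    (hJ : J ∈ E'.F.H) : E'.Δ J = projΔ D' T J := by
  have hproj := h.isHironakaProjection
  obtain ⟨hKE, -⟩ := hE.mem_H_iff.1 hJ
  obtain ⟨hU, hJT⟩ := mem_projH_iff.1 (h.charTransform_H_eq hE hD ▸ hJ)
  rw [hE.Δ_eq hJ, projΔ, hD.Δ_eq hU]
  by_cases hi : inf ∈ J
  · rw [charΔ_of_mem E hi hKE, hproj.2.2.2 _ hKE]
    exact lamMap_image_projΔ D hD.1 (h.disjoint hE) hi (h.notMem_center hD) hJT
      (mem_projH_iff.1 (hproj.2.1 ▸ hKE)).1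
  · rw [blowdown_of_notMem hi] at hKE
    rw [charΔ_of_notMem E hi, charΔ_of_notMem D fun h' =>
      (Finset.mem_union.1 h').elim hi (h.notMem_center hD)]
    exact hproj.2.2.2 J hKE

lemma charTransform (h : MaxContactProjection D E T)
    (hE : IsCharTransformAt E E' Js inf) (hD : IsCharTransformAt D D' (Js ∪ T) inf) :
    MaxContactProjection D' E' T := by
  refine ⟨h.charTransform_notMem_Sing hD, h.charTransform_hasMaximalContact hE hD,
    ?_, h.charTransform_H_eq hE hD, ?_, fun J hJ => h.charTransform_Δ_eq hE hD hJ⟩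
  · rw [hE.2.2.2.1, h.isHironakaProjection.1, hD.2.2.2.1,
      Finset.insert_sdiff_of_notMem _ (h.notMem_center hD)]
  · rw [hE.2.1, h.isHironakaProjection.2.2.1, hD.2.1]

lemma Sing_eq_empty (h : MaxContactProjection D E T) (hE : Sing E = ∅) : Sing D = ∅ :=
  Set.eq_empty_of_forall_notMem fun _ hJ => (hE ▸ h.isHironakaProjection.sdiff_mem_Sing
    h.notMem_Sing h.hasMaximalContact hJ :)

end MaxContactProjection

end Lifting

section Rename

variable (π : Equiv.Perm ℕ)

/-- Relabelling of coordinates: index `i` becomes `π i`. -/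
def renameVec (σ : Vec) : Vec := σ ∘ π.symm

@[simp] lemma renameVec_apply (σ : Vec) (j : ℕ) : renameVec π σ j = σ (π.symm j) := rfl

lemma isLinearMap_renameVec : IsLinearMap ℝ (renameVec π) := ⟨fun _ _ => rfl, fun _ _ => rfl⟩

lemma sum_renameVec (J : Finset ℕ) (σ : Vec) :
    ∑ j ∈ J.map π.toEmbedding, renameVec π σ j = ∑ j ∈ J, σ j := by
  simp [Finset.sum_map]

lemma renameVec_image_suppCone (J : Finset ℕ) :
    renameVec π '' suppCone J = suppCone (J.map π.toEmbedding) := by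
  refine Set.Subset.antisymm ?_ fun τ hτ =>
    ⟨renameVec π.symm τ, ?_, by ext; simp [renameVec]⟩
  · rintro _ ⟨σ, hσ, rfl⟩
    exact ⟨fun j => hσ.1 _, fun j hj => hσ.2 _ (by simpa using hj)⟩
  · exact ⟨fun j => hτ.1 _, fun j hj => hτ.2 _ (by simpa [renameVec] using hj)⟩

lemma renameVec_image_posHull (J : Finset ℕ) (A : Set Vec) :
    renameVec π '' posHull J A = posHull (J.map π.toEmbedding) (renameVec π '' A) := by
  rw [posHull_eq_add, posHull_eq_add, (isLinearMap_renameVec π).image_add,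
    (isLinearMap_renameVec π).image_convexHull, renameVec_image_suppCone]

lemma renameVec_mem_latticePts {J : Finset ℕ} {d : ℕ} {a : Vec} (ha : a ∈ latticePts J d) :
    renameVec π a ∈ latticePts (J.map π.toEmbedding) d :=
  ⟨renameVec_image_suppCone π J ▸ Set.mem_image_of_mem _ ha.1, fun j => ha.2 (π.symm j)⟩

lemma restrict_renameVec (J : Finset ℕ) (σ : Vec) :
    restrict (J.map π.toEmbedding) (renameVec π σ) = renameVec π (restrict J σ) := by
  ext j
  simp [restrict]

lemma renameVec_lamMap (J J' : Finset ℕ) (inf : ℕ) (σ : Vec) :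
    renameVec π (lamMap J J' inf σ) =
      lamMap (J.map π.toEmbedding) (J'.map π.toEmbedding) (π inf) (renameVec π σ) := by
  ext j
  simp [lamMap, Finset.sum_map, π.symm_apply_eq]

lemma renameVec_eVec (inf : ℕ) : renameVec π (eVec inf) = eVec (π inf) := by
  ext j
  simp [eVec, π.symm_apply_eq]

lemma map_blowdown (J J' : Finset ℕ) (inf : ℕ) :
    (blowdown J inf J').map π.toEmbedding =
      blowdown (J.map π.toEmbedding) (π inf) (J'.map π.toEmbedding) := by
  by_cases hi : inf ∈ J'
  · rw [blowdown_of_mem hi, blowdown_of_mem (by simpa using hi), Finset.map_union,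
      Finset.map_erase]
    rfl
  · rw [blowdown_of_notMem hi, blowdown_of_notMem (by simpa using hi)]

lemma contactExp_renameVec_image (J : Finset ℕ) (Δ : Set Vec) :
    contactExp (J.map π.toEmbedding) (renameVec π '' Δ) = contactExp J Δ := by
  simp only [contactExp, Finset.map_eq_empty, Set.image_image, sum_renameVec]

noncomputable def PolySys.rename (P : PolySys) : PolySys where
  F :=
    { I := P.F.I.map π.toEmbedding
      I_nonempty := P.F.I_nonempty.map
      H := {J | J.map π.symm.toEmbedding ∈ P.F.H}
      mem_sub := fun J hJ => by
        simpa using (Finset.subset_map_symm (f := π.symm)).2 (P.F.mem_sub _ hJ)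
      downward := fun J hJ J' hJ' => P.F.downward _ hJ _ (Finset.map_subset_map.2 hJ') }
  d := P.d
  d_pos := P.d_pos
  Δ J := renameVec π '' P.Δ (J.map π.symm.toEmbedding)
  char J hJ := by
    obtain ⟨A, hA, hΔ⟩ := P.char _ hJ
    refine ⟨renameVec π '' A, ?_, ?_⟩
    · rintro _ ⟨a, ha, rfl⟩
      simpa [Finset.map_map] using renameVec_mem_latticePts π (hA ha)
    · rw [hΔ, renameVec_image_posHull]
      simp [Finset.map_map]
  nonempty J hJ := (P.nonempty _ hJ).image _
  compat J₁ h₁ J₂ h₂ h12 := by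
    rw [← P.restrict_image_Δ h₁ h₂ (Finset.map_subset_map.2 h12), Set.image_image,
      Set.image_image]
    refine Set.image_congr fun σ _ => ?_
    rw [← restrict_renameVec]
    simp [Finset.map_map]
    rfl

variable {π}

lemma PolySys.rename_Δ_map (P : PolySys) (J : Finset ℕ) :
    (P.rename π).Δ (J.map π.toEmbedding) = renameVec π '' P.Δ J := by
  simp [PolySys.rename, Finset.map_map]

lemma PolySys.mem_Sing_rename_iff {P : PolySys} {J : Finset ℕ} :
    J ∈ Sing (P.rename π) ↔ J.map π.symm.toEmbedding ∈ Sing P := by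
  have h := contactExp_renameVec_image π (J.map π.symm.toEmbedding)
    (P.Δ (J.map π.symm.toEmbedding))
  rw [show (J.map π.symm.toEmbedding).map π.toEmbedding = J by simp [Finset.map_map]] at h
  exact and_congr_right fun _ => by rw [← h]; rfl

lemma PolySys.Sing_rename_eq_empty {P : PolySys} (h : Sing P = ∅) : Sing (P.rename π) = ∅ :=
  Set.eq_empty_of_forall_notMem fun _ hJ => (h ▸ PolySys.mem_Sing_rename_iff.1 hJ :)

lemma renameVec_image_charΔ (P : PolySys) (J K : Finset ℕ) (inf : ℕ) :
    renameVec π '' charΔ P J inf K =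
      charΔ (P.rename π) (J.map π.toEmbedding) (π inf) (K.map π.toEmbedding) := by
  by_cases hi : inf ∈ K
  · have hlam : lamMap (J.map π.toEmbedding) (K.map π.toEmbedding) (π inf) ''
        (renameVec π '' P.Δ (blowdown J inf K)) =
          renameVec π '' (lamMap J K inf '' P.Δ (blowdown J inf K)) := by
      rw [Set.image_image, Set.image_image]
      exact Set.image_congr fun τ _ => (renameVec_lamMap π J K inf τ).symm
    rw [charΔ, if_pos hi, charΔ, if_pos (by simpa using hi), ← map_blowdown,
      PolySys.rename_Δ_map, hlam, ← renameVec_image_posHull, Set.image_image, Set.image_image]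
    refine Set.image_congr fun σ _ => ?_
    rw [(isLinearMap_renameVec π).map_sub, renameVec_eVec]
  · rw [charΔ_of_notMem P hi, charΔ_of_notMem _ (by simpa using hi), PolySys.rename_Δ_map]

lemma IsCharTransformAt.rename {P Q : PolySys} {J : Finset ℕ} {inf : ℕ}
    (h : IsCharTransformAt P Q J inf) :
    IsCharTransformAt (P.rename π) (Q.rename π) (J.map π.toEmbedding) (π inf) := by
  have hJ : J.map π.toEmbedding ∈ Sing (P.rename π) := by
    rw [PolySys.mem_Sing_rename_iff]; simpa [Finset.map_map] using h.1
  have hinf : π inf ∉ (P.rename π).F.I := by simpa [PolySys.rename] using h.2.2.1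
  refine ⟨hJ, h.2.1, hinf, ?_, ?_, fun K hK => ?_⟩
  · simp [PolySys.rename, h.2.2.2.1]
  · ext K
    change K.map π.symm.toEmbedding ∈ Q.F.H ↔ _
    rw [h.mem_H_iff, (P.rename π).F.mem_blowupH_iff hJ.1 hinf]
    change _ ↔ (blowdown _ _ K).map π.symm.toEmbedding ∈ P.F.H ∧ _
    rw [map_blowdown]
    simp [Finset.map_map, Finset.subset_map_symm]
  · change renameVec π '' Q.Δ _ = _
    rw [h.Δ_eq hK, renameVec_image_charΔ]
    simp [Finset.map_map]

variable {P : PolySys}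

lemma map_eq_self_of_fixes {K : Finset ℕ} (hπ : ∀ i ∈ K, π i = i) :
    K.map π.toEmbedding = K := by
  ext j
  refine ⟨fun h => ?_, fun h => Finset.mem_map.2 ⟨j, h, hπ j h⟩⟩
  obtain ⟨i, hi, rfl⟩ := Finset.mem_map.1 h
  simpa [hπ i hi] using hi

lemma PolySys.rename_I_of_fixes (hπ : ∀ i ∈ P.F.I, π i = i) : (P.rename π).F.I = P.F.I :=
  map_eq_self_of_fixes hπ

lemma PolySys.rename_H_of_fixes (hπ : ∀ i ∈ P.F.I, π i = i) : (P.rename π).F.H = P.F.H := by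
  ext K
  change K.map π.symm.toEmbedding ∈ P.F.H ↔ K ∈ P.F.H
  refine ⟨fun h => ?_, fun h => ?_⟩
  · have hK : ∀ i ∈ K, π.symm i = i := fun i hi => by
      simpa using (hπ _ (P.F.mem_sub _ h (Finset.mem_map_of_mem _ hi))).symm
    rwa [map_eq_self_of_fixes hK] at h
  · rwa [map_eq_self_of_fixes fun i hi => π.symm_apply_eq.2 (hπ i (P.F.mem_sub _ h hi)).symm]

lemma PolySys.rename_Δ_of_fixes (hπ : ∀ i ∈ P.F.I, π i = i) {K : Finset ℕ}
    (hK : K ∈ P.F.H) :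
    (P.rename π).Δ K = P.Δ K := by
  have hKπ : ∀ i ∈ K, π i = i := fun i hi => hπ i (P.F.mem_sub _ hK hi)
  have hKπ' : ∀ i ∈ K, π.symm i = i := fun i hi => π.symm_apply_eq.2 (hKπ i hi).symm
  change renameVec π '' P.Δ (K.map π.symm.toEmbedding) = P.Δ K
  rw [map_eq_self_of_fixes hKπ']
  refine (Set.image_congr fun σ hσ => ?_).trans (Set.image_id _)
  have hsupp := (P.Δ_subset_suppCone hK hσ).2
  ext j
  by_cases hj : j ∈ K
  · rw [renameVec_apply, hKπ' j hj, id]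
  · have hj' : π.symm j ∉ K := fun h => hj (by
      have := hKπ _ h
      rw [π.apply_symm_apply] at this
      rwa [this])
    rw [renameVec_apply, hsupp _ hj', id, hsupp _ hj]

end Rename

lemma IsCharTransformAt.of_agree {P P' Q : PolySys} {J : Finset ℕ} {inf : ℕ}
    (h : IsCharTransformAt P Q J inf) (hd : P'.d = P.d) (hI : P'.F.I = P.F.I)
    (hH : P'.F.H = P.F.H) (hΔ : ∀ K ∈ P.F.H, P'.Δ K = P.Δ K) :
    IsCharTransformAt P' Q J inf := by
  have hSing : Sing P' = Sing P := by
    ext K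
    change K ∈ P'.F.H ∧ _ ↔ K ∈ P.F.H ∧ _
    rw [hH]
    exact and_congr_right fun hK => by rw [hΔ K hK]
  have hJ : J ∈ Sing P' := hSing ▸ h.1
  refine ⟨hJ, h.2.1.trans hd.symm, hI ▸ h.2.2.1, hI ▸ h.2.2.2.1, hH ▸ h.2.2.2.2.1,
    fun K hK => ?_⟩
  have hK' := (h.mem_H_iff.1 hK).1
  rw [h.Δ_eq hK]
  by_cases hi : inf ∈ K
  · rw [charΔ, if_pos hi, charΔ, if_pos hi, hΔ _ hK']
  · rw [blowdown_of_notMem hi] at hK'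
    rw [charΔ_of_notMem _ hi, charΔ_of_notMem _ hi, hΔ _ hK']

def ReducesIn (k : ℕ) (P : PolySys) : Prop :=
  ∃ seq : ℕ → PolySys, seq 0 = P ∧
    (∀ i, i < k → ∃ J, IsCharTransform (seq i) (seq (i + 1)) J) ∧ Sing (seq k) = ∅

namespace ReducesIn

variable {k : ℕ} {P : PolySys}

lemma Sing_eq_empty (h : ReducesIn 0 P) : Sing P = ∅ := by
  obtain ⟨seq, rfl, -, h⟩ := h
  exact h

lemma exists_charTransform (h : ReducesIn (k + 1) P) :
    ∃ Q J, IsCharTransform P Q J ∧ ReducesIn k Q := by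
  obtain ⟨seq, rfl, hstep, hk⟩ := h
  obtain ⟨J, hJ⟩ := hstep 0 k.succ_pos
  exact ⟨seq 1, J, hJ, fun i => seq (i + 1), rfl, fun i hi => hstep (i + 1) (by omega), hk⟩

lemma rename (π : Equiv.Perm ℕ) (h : ReducesIn k P) : ReducesIn k (P.rename π) := by
  obtain ⟨seq, rfl, hstep, hk⟩ := h
  refine ⟨fun i => (seq i).rename π, rfl, fun i hi => ?_, PolySys.Sing_rename_eq_empty hk⟩
  obtain ⟨J, inf, h⟩ := hstep i hi
  exact ⟨_, _, h.rename⟩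

end ReducesIn

lemma HasReduction.of_Sing_eq_empty {P : PolySys} (h : Sing P = ∅) : HasReduction P :=
  ⟨0, fun _ => P, rfl, fun _ hi => absurd hi (Nat.not_lt_zero _), h⟩

lemma HasReduction.of_charTransform {P Q : PolySys} {J : Finset ℕ}
    (hPQ : IsCharTransform P Q J) (hQ : HasReduction Q) : HasReduction P := by
  obtain ⟨k, seq, rfl, hstep, hk⟩ := hQ
  refine ⟨k + 1, fun i => Nat.casesOn i P seq, rfl, fun i hi => ?_, hk⟩
  cases i with
  | zero => exact ⟨J, hPQ⟩
  | succ i => exact hstep i (by omega)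

lemma IsCharTransformAt.exists_fresh {E E' : PolySys} {J : Finset ℕ} {inf k : ℕ}
    (h : IsCharTransformAt E E' J inf) (hE' : ReducesIn k E') (S : Finset ℕ) :
    ∃ inf' ∉ S, ∃ E'', IsCharTransformAt E E'' J inf' ∧ ReducesIn k E'' := by
  obtain ⟨inf', hinf'⟩ := Infinite.exists_notMem_finset (S ∪ E.F.I)
  rw [Finset.mem_union, not_or] at hinf'
  set π := Equiv.swap inf inf'
  have hπ : ∀ i ∈ E.F.I, π i = i := fun i hi =>
    Equiv.swap_apply_of_ne_of_ne (ne_of_mem_of_not_mem hi h.2.2.1)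
      (ne_of_mem_of_not_mem hi hinf'.2)
  have h' := h.rename (π := π)
  rw [map_eq_self_of_fixes fun i hi => hπ i (E.F.mem_sub J h.1.1 hi), Equiv.swap_apply_left]
    at h'
  have hH := PolySys.rename_H_of_fixes hπ
  refine ⟨inf', hinf'.1, E'.rename π, h'.of_agree rfl (PolySys.rename_I_of_fixes hπ).symm
    hH.symm fun K hK => ?_, hE'.rename π⟩
  exact (PolySys.rename_Δ_of_fixes hπ (hH ▸ hK)).symm

theorem MaxContactProjection.hasReduction {D E : PolySys} {T : Finset ℕ} {k : ℕ}
    (h : MaxContactProjection D E T) (hE : ReducesIn k E) : HasReduction D := by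
  induction k generalizing D E with
  | zero => exact .of_Sing_eq_empty (h.Sing_eq_empty hE.Sing_eq_empty)
  | succ k ih =>
    obtain ⟨E₁, Js, ⟨_, htr⟩, hE₁⟩ := hE.exists_charTransform
    -- the exceptional index of `htr` may lie in `T ⊆ D.F.I`; relabel it
    obtain ⟨inf, hinf, E₁', htr', hE₁'⟩ := htr.exists_fresh hE₁ D.F.I
    obtain ⟨D₁, hD⟩ := exists_isCharTransformAt D
      (h.isHironakaProjection.union_mem_Sing htr'.1).1 hinf
    exact .of_charTransform ⟨inf, hD⟩ (ih (h.charTransform htr' hD) hE₁')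

theorem reduction_via_maximal_contact_general (D E : PolySys)
    (T : Finset ℕ) (hTns : T ∉ Sing D) (hmc : HasMaximalContact D T)
    (hproj : IsHironakaProjection D E T) (hred : HasReduction E) :
    HasReduction D :=
  let ⟨_, hE⟩ := hred
  MaxContactProjection.hasReduction ⟨hTns, hmc, hproj⟩ hE

/-- Reduction of singularities via maximal contact: if `T ∉ Sing(D)` has maximal
contact with the special system `D` and Hironaka's projection `D^T` admits a
reduction of singularities, then so does `D`. -/
theorem reduction_via_maximal_contact (D E : PolySys) (hsp : IsSpecial D)
    (T : Finset ℕ) (hTns : T ∉ Sing D) (hmc : HasMaximalContact D T)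
    (hproj : IsHironakaProjection D E T) (hred : HasReduction E) :
    HasReduction D :=
  reduction_via_maximal_contact_general D E T hTns hmc hproj hred

end RedSing
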